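/- arXiv:0911.0077 — 3 statements merged into one kernel-verified Lean document; each statement's English description precedes it below -/
import Mathlib

section
/- Let d, d₁ ≥ 1, let a be a real symmetric d×d matrix, let σ be a real d×d₁ matrix, and let κ > 0, K > 0 be constants such that κ·I_d + σσᵀ ≼ 2a and 2a ≼ K·I_d in the Loewner order. Then for every δ > 0 and all vectors ξ ∈ ℝ^d, η ∈ ℝ^{d₁}: 2⟨aξ, ξ⟩ + 2⟨ση, ξ⟩ + ‖η‖² ≥ (−2δK + (1+δ)κ)·‖ξ‖² + (δ/(1+δ))·‖η‖². -/
open Matrix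

theorem stmt_0 (d d₁ : ℕ) (hd : 1 ≤ d) (hd₁ : 1 ≤ d₁)
    (a : Matrix (Fin d) (Fin d) ℝ) (ha : a.IsSymm)
    (σ : Matrix (Fin d) (Fin d₁) ℝ)
    (κ K : ℝ) (hκ : 0 < κ) (hK : 0 < K)
    (hlow : (2 • a - (κ • (1 : Matrix (Fin d) (Fin d) ℝ) + σ * σᵀ)).PosSemidef)
    (hup : (K • (1 : Matrix (Fin d) (Fin d) ℝ) - 2 • a).PosSemidef) :
    ∀ δ : ℝ, 0 < δ → ∀ (ξ : Fin d → ℝ) (η : Fin d₁ → ℝ),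
      2 * (a.mulVec ξ ⬝ᵥ ξ) + 2 * (σ.mulVec η ⬝ᵥ ξ) + η ⬝ᵥ η ≥
        (-2 * δ * K + (1 + δ) * κ) * (ξ ⬝ᵥ ξ) + (δ / (1 + δ)) * (η ⬝ᵥ η) := by
  intro δ hδ ξ η
  have ht : (0:ℝ) < 1 + δ := by linarith
  have sq : ∀ {n : ℕ} (v : Fin n → ℝ), 0 ≤ v ⬝ᵥ v := fun v => by
    simpa using dotProduct_self_star_nonneg v
  set s : Fin d₁ → ℝ := σᵀ.mulVec ξ with hs
  set A : ℝ := ξ ⬝ᵥ a.mulVec ξ with hA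
  set X : ℝ := ξ ⬝ᵥ ξ with hX
  set S : ℝ := s ⬝ᵥ s with hS
  set E : ℝ := η ⬝ᵥ η with hE
  set P : ℝ := s ⬝ᵥ η with hP
  have g1 : a.mulVec ξ ⬝ᵥ ξ = A := dotProduct_comm _ _
  have g2 : σ.mulVec η ⬝ᵥ ξ = P := by
    rw [dotProduct_comm, dotProduct_mulVec, ← mulVec_transpose]
  have hss : ξ ⬝ᵥ (σ * σᵀ).mulVec ξ = S := by
    rw [hS, hs, ← mulVec_mulVec, dotProduct_mulVec, ← mulVec_transpose]
  have h1 : κ * X + S ≤ 2 * A := by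
    have h' := hlow.dotProduct_mulVec_nonneg ξ
    simp only [star_trivial, sub_mulVec, add_mulVec, smul_mulVec,
      one_mulVec, dotProduct_sub, dotProduct_add, dotProduct_smul,
      smul_eq_mul, hss] at h'
    simp only [nsmul_eq_mul, Nat.cast_ofNat] at h'
    linarith [h']
  have h2 : 2 * A ≤ K * X := by
    have h' := hup.dotProduct_mulVec_nonneg ξ
    simp only [star_trivial, sub_mulVec, smul_mulVec, one_mulVec,
      dotProduct_sub, dotProduct_smul, smul_eq_mul] at h'
    simp only [nsmul_eq_mul, Nat.cast_ofNat] at h'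
    linarith [h']
  have h3 : 0 ≤ (1+δ)^2 * S + 2*(1+δ)*P + E := by
    have h := sq ((1+δ) • s + η)
    simp only [dotProduct_add, add_dotProduct, smul_dotProduct,
      dotProduct_smul, smul_eq_mul, hP, dotProduct_comm η s] at h
    nlinarith [h]
  have hXn : 0 ≤ X := sq ξ
  have t1 : 0 ≤ (1+δ)^2 * (2*A - (κ*X + S)) :=
    mul_nonneg (sq_nonneg _) (by linarith)
  have t2 : 0 ≤ δ*(1+δ)*(K*X - 2*A) :=
    mul_nonneg (by positivity) (by linarith)
  have t4 : 0 ≤ δ*K*(1+δ)*X := by positivity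
  rw [g1, g2, ge_iff_le]
  set q : ℝ := δ / (1 + δ) with hqdef
  have hq2 : q * (1+δ) = δ := by
    rw [hqdef]; field_simp
  have h5 : q*E*(1+δ) = δ*E := by rw [mul_right_comm, hq2]
  have key : ((-2 * δ * K + (1 + δ) * κ) * X + q * E) * (1+δ)
      ≤ (2 * A + 2 * P + E) * (1+δ) := by
    have hid : (2 * A + 2 * P + E) * (1+δ)
        - ((-2 * δ * K + (1 + δ) * κ) * X + q * E) * (1+δ)
        = (1+δ)^2 * (2*A - (κ*X + S)) + δ*(1+δ)*(K*X - 2*A)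
          + ((1+δ)^2 * S + 2*(1+δ)*P + E) + δ*K*(1+δ)*X
          + (δ*E - q*E*(1+δ)) := by ring
    linarith [t1, t2, h3, t4, h5, hid]
  exact le_of_mul_le_mul_right key ht
end

section
/- Let d, d₁ ≥ 1 and let κ ∈ (0,1), K ∈ (1,∞). Let a : ℝ^d → (symmetric real d×d matrices), b : ℝ^d → ℝ^d, c : ℝ^d → ℝ, σ : ℝ^d → (real d×d₁ matrices) and ν : ℝ^d → ℝ^{d₁} be Borel measurable functions whose entries are all bounded in absolute value by K, and suppose that for every x ∈ ℝ^d the super-parabolic condition κ·I_d + σ(x)σ(x)ᵀ ≼ 2a(x) ≼ K·I_d holds in the Loewner order. Then there exists a constant C, depending only on κ, K, d, d₁, such that for every u ∈ C_c^∞(ℝ^d, ℝ): 2∫_{ℝ^d} ( −⟨a(x)∇u(x), ∇u(x)⟩ + u(x)⟨b(x), ∇u(x)⟩ − c(x)·u(x)² ) dx + ∫_{ℝ^d} ‖σ(x)ᵀ∇u(x) + u(x)·ν(x)‖² dx ≤ −(κ/2)·∫_{ℝ^d} ( u(x)² + ‖∇u(x)‖² ) dx + C·∫_{ℝ^d} u(x)²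 dx. -/
open Matrix MeasureTheory

/-- The `i`-th partial derivative of `f : ℝ^d → ℝ`. -/
noncomputable def pd {d : ℕ} (i : Fin d) (f : (Fin d → ℝ) → ℝ) (x : Fin d → ℝ) : ℝ :=
  fderiv ℝ f x (Pi.single i 1)

/-- The gradient of `f : ℝ^d → ℝ` as a vector in `ℝ^d`. -/
noncomputable def grad {d : ℕ} (f : (Fin d → ℝ) → ℝ) (x : Fin d → ℝ) : Fin d → ℝ :=
  fun i => pd i f x

lemma amgm (κ : ℝ) (hκ : 0 < κ) (p q : ℝ) : 2*p*q ≤ (κ/2)*q^2 + (2/κ)*p^2 := by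
  have h := sq_nonneg (κ*q - 2*p)
  have heq : (κ/2)*q^2 + (2/κ)*p^2 - 2*p*q = (κ*q-2*p)^2/(2*κ) := by
    field_simp; ring
  nlinarith [div_nonneg h (by positivity : (0:ℝ) ≤ 2*κ)]

lemma dot_bound {n : ℕ} (p q : Fin n → ℝ) (P Q : ℝ) (hP : ∀ i, |p i| ≤ P)
    (hQ : ∀ i, |q i| ≤ Q) (hQ0 : 0 ≤ Q) : |p ⬝ᵥ q| ≤ n * (P * Q) := by
  calc |p ⬝ᵥ q| = |∑ i, p i * q i| := rfl
    _ ≤ ∑ i, |p i * q i| := Finset.abs_sum_le_sum_abs _ _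
    _ ≤ ∑ _i : Fin n, P * Q := Finset.sum_le_sum fun i _ => by
        rw [abs_mul]
        exact mul_le_mul (hP i) (hQ i) (abs_nonneg _) (le_trans (abs_nonneg _) (hP i))
    _ = n * (P*Q) := by rw [Finset.sum_const, Finset.card_univ, Fintype.card_fin, nsmul_eq_mul]

lemma abs3 (x1 x2 x3 : ℝ) : |x1 + x2 - x3| ≤ |x1| + |x2| + |x3| := by
  have h := abs_add_le (x1 + x2) (-x3)
  have h2 := abs_add_le x1 x2
  rw [abs_neg] at h
  have h3 : x1 + x2 - x3 = x1 + x2 + -x3 := by ring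
  rw [h3]
  linarith

lemma integrable_aux {d : ℕ} (f : (Fin d → ℝ) → ℝ) (hf : Measurable f)
    (s : Set (Fin d → ℝ)) (hs : IsCompact s) (M : ℝ)
    (hM : ∀ x, |f x| ≤ M) (h0 : ∀ x ∉ s, f x = 0) : Integrable f := by
  have hi : Integrable (s.indicator fun _ => M) :=
    (integrable_indicator_iff hs.measurableSet).2
      (integrableOn_const hs.measure_lt_top.ne)
  refine hi.mono' hf.aestronglyMeasurable ?_
  filter_upwards with x
  by_cases hx : x ∈ s
  · simp [Set.indicator_of_mem hx, Real.norm_eq_abs, hM x]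
  · simp [Set.indicator_of_notMem hx, Real.norm_eq_abs, h0 x hx]

lemma pointwise (d d₁ : ℕ) (κ K : ℝ) (hκ0 : 0 < κ) (hK1 : 1 < K)
    (A : Matrix (Fin d) (Fin d) ℝ) (b : Fin d → ℝ) (c : ℝ)
    (σ : Matrix (Fin d) (Fin d₁) ℝ) (ν : Fin d₁ → ℝ)
    (hb : ∀ i, |b i| ≤ K) (hc : |c| ≤ K) (hσ : ∀ i k, |σ i k| ≤ K) (hν : ∀ k, |ν k| ≤ K)
    (hpsd : (2 • A - (κ • (1 : Matrix (Fin d) (Fin d) ℝ) + σ * σᵀ)).PosSemidef)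
    (g : Fin d → ℝ) (v : ℝ) :
    2 * (-(A.mulVec g ⬝ᵥ g) + v * (b ⬝ᵥ g) - c * v^2) + ∑ k, (σᵀ.mulVec g k + v * ν k)^2
      ≤ -(κ/2) * (v^2 + g ⬝ᵥ g)
        + (κ/2 + (2/κ)*(d*(K + d₁*K^2)^2) + 2*K + d₁*K^2) * v^2 := by
  set s : Fin d₁ → ℝ := σᵀ *ᵥ g with hs
  set w : Fin d → ℝ := fun i => b i + (σ *ᵥ ν) i with hw
  have hKd : (0:ℝ) ≤ K + d₁*K^2 := by positivity
  have hF1 := hpsd.dotProduct_mulVec_nonneg g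
  rw [star_trivial] at hF1
  have hσσ : (σ * σᵀ) *ᵥ g = σ *ᵥ s := (mulVec_mulVec g σ σᵀ).symm
  have hgs : g ⬝ᵥ (σ *ᵥ s) = s ⬝ᵥ s := by
    rw [dotProduct_mulVec, ← mulVec_transpose]
  have key1 : κ * (g ⬝ᵥ g) + s ⬝ᵥ s ≤ 2 * (A *ᵥ g ⬝ᵥ g) := by
    rw [sub_mulVec, add_mulVec, hσσ, dotProduct_sub, dotProduct_add, hgs] at hF1
    have h1 : g ⬝ᵥ ((κ • (1 : Matrix (Fin d) (Fin d) ℝ)) *ᵥ g) = κ * (g ⬝ᵥ g) := by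
      rw [smul_mulVec, one_mulVec, dotProduct_smul, smul_eq_mul]
    have h2 : g ⬝ᵥ ((2 • A) *ᵥ g) = 2 * (A *ᵥ g ⬝ᵥ g) := by
      rw [smul_mulVec, dotProduct_smul, dotProduct_comm]
      simp
    rw [h1, h2] at hF1
    linarith
  have hexp : ∑ k, (s k + v * ν k)^2 = s ⬝ᵥ s + 2*v*(ν ⬝ᵥ s) + v^2*(ν ⬝ᵥ ν) := by
    simp only [dotProduct, Finset.mul_sum]
    rw [← Finset.sum_add_distrib, ← Finset.sum_add_distrib]
    exact Finset.sum_congr rfl fun k _ => by ring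
  have hνs : ν ⬝ᵥ s = (σ *ᵥ ν) ⬝ᵥ g := by
    rw [hs, dotProduct_mulVec, vecMul_transpose]
  have hF4 : 2*v*(w ⬝ᵥ g) ≤ (κ/2)*(g ⬝ᵥ g) + (2/κ)*(v^2*(w ⬝ᵥ w)) := by
    simp only [dotProduct, Finset.mul_sum]
    rw [← Finset.sum_add_distrib]
    refine Finset.sum_le_sum fun i _ => ?_
    have := amgm κ hκ0 (v * w i) (g i)
    nlinarith [this]
  have hwg : w ⬝ᵥ g = b ⬝ᵥ g + (σ *ᵥ ν) ⬝ᵥ g := by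
    simp only [hw, dotProduct, add_mul, Finset.sum_add_distrib]
  have hσν : ∀ i, |(σ *ᵥ ν) i| ≤ d₁ * K^2 := by
    intro i
    have hrfl : (σ *ᵥ ν) i = ∑ k, σ i k * ν k := rfl
    rw [hrfl]
    calc |∑ k, σ i k * ν k| ≤ ∑ k, |σ i k * ν k| := Finset.abs_sum_le_sum_abs _ _
      _ ≤ ∑ _k : Fin d₁, K * K := Finset.sum_le_sum fun k _ => by
          rw [abs_mul]
          exact mul_le_mul (hσ i k) (hν k) (abs_nonneg _) (le_of_lt (lt_trans one_pos hK1))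
      _ = d₁ * K^2 := by
          rw [Finset.sum_const, Finset.card_univ, Fintype.card_fin, nsmul_eq_mul]; ring
  have hF5 : w ⬝ᵥ w ≤ d*(K + d₁*K^2)^2 := by
    calc w ⬝ᵥ w = ∑ i, w i * w i := rfl
      _ ≤ ∑ _i : Fin d, (K + d₁*K^2)^2 := Finset.sum_le_sum fun i _ => by
          have h1 : |w i| ≤ K + d₁*K^2 := by
            calc |w i| ≤ |b i| + |(σ *ᵥ ν) i| := abs_add_le _ _
              _ ≤ K + d₁*K^2 := add_le_add (hb i) (hσν i)
          calc w i * w i = |w i|^2 := by rw [sq_abs]; ring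
            _ ≤ (K + d₁*K^2)^2 := pow_le_pow_left₀ (abs_nonneg _) h1 2
      _ = d*(K + d₁*K^2)^2 := by
          rw [Finset.sum_const, Finset.card_univ, Fintype.card_fin, nsmul_eq_mul]
  have hF6 : ν ⬝ᵥ ν ≤ d₁ * K^2 := by
    calc ν ⬝ᵥ ν = ∑ k, ν k * ν k := rfl
      _ ≤ ∑ _k : Fin d₁, K^2 := Finset.sum_le_sum fun k _ => by
          have := hν k
          nlinarith [abs_nonneg (ν k), sq_abs (ν k), neg_abs_le (ν k), le_abs_self (ν k)]
      _ = d₁ * K^2 := by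
          rw [Finset.sum_const, Finset.card_univ, Fintype.card_fin, nsmul_eq_mul]
  have hv2 : (0:ℝ) ≤ v^2 := sq_nonneg v
  have hcκ : (0:ℝ) ≤ 2/κ := by positivity
  have h5' : (2/κ)*(v^2*(w ⬝ᵥ w)) ≤ (2/κ)*(d*(K + d₁*K^2)^2)*v^2 := by
    have : v^2*(w ⬝ᵥ w) ≤ v^2*(d*(K + d₁*K^2)^2) := mul_le_mul_of_nonneg_left hF5 hv2
    calc (2/κ)*(v^2*(w ⬝ᵥ w)) ≤ (2/κ)*(v^2*(d*(K + d₁*K^2)^2)) :=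
          mul_le_mul_of_nonneg_left this hcκ
      _ = (2/κ)*(d*(K + d₁*K^2)^2)*v^2 := by ring
  have hν' : v^2*(ν ⬝ᵥ ν) ≤ d₁*K^2*v^2 := by
    calc v^2*(ν ⬝ᵥ ν) ≤ v^2*(d₁*K^2) := mul_le_mul_of_nonneg_left hF6 hv2
      _ = d₁*K^2*v^2 := by ring
  have hc' : -(c*v^2) ≤ K*v^2 := by
    have h1 : -c ≤ K := by have := (abs_le.mp hc).1; linarith
    calc -(c*v^2) = (-c)*v^2 := by ring
      _ ≤ K*v^2 := mul_le_mul_of_nonneg_right h1 hv2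
  have hwg' : 2*v*(w ⬝ᵥ g) = 2*v*(b ⬝ᵥ g) + 2*v*((σ *ᵥ ν) ⬝ᵥ g) := by rw [hwg]; ring
  rw [hexp, hνs]
  linarith [hF4, key1, hwg']

theorem stmt_1 (d d₁ : ℕ) (hd : 1 ≤ d) (hd₁ : 1 ≤ d₁)
    (κ K : ℝ) (hκ : κ ∈ Set.Ioo (0 : ℝ) 1) (hK : K ∈ Set.Ioi (1 : ℝ)) :
    ∃ C : ℝ,
      ∀ (a : (Fin d → ℝ) → Matrix (Fin d) (Fin d) ℝ)
        (b : (Fin d → ℝ) → Fin d → ℝ)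
        (c : (Fin d → ℝ) → ℝ)
        (σ : (Fin d → ℝ) → Matrix (Fin d) (Fin d₁) ℝ)
        (ν : (Fin d → ℝ) → Fin d₁ → ℝ),
        (∀ x, (a x).IsSymm) →
        (∀ i j, Measurable fun x => a x i j) →
        (∀ i, Measurable fun x => b x i) →
        Measurable c →
        (∀ i k, Measurable fun x => σ x i k) →
        (∀ k, Measurable fun x => ν x k) →
        (∀ x i j, |a x i j| ≤ K) →
        (∀ x i, |b x i| ≤ K) →
        (∀ x, |c x| ≤ K) →
        (∀ x i k, |σ x i k| ≤ K) →
        (∀ x k, |ν x k| ≤ K) →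
        (∀ x, (2 • a x - (κ • (1 : Matrix (Fin d) (Fin d) ℝ) + σ x * (σ x)ᵀ)).PosSemidef) →
        (∀ x, (K • (1 : Matrix (Fin d) (Fin d) ℝ) - 2 • a x).PosSemidef) →
        ∀ u : (Fin d → ℝ) → ℝ, ContDiff ℝ (⊤ : ℕ∞) u → HasCompactSupport u →
          2 * (∫ x, (-((a x).mulVec (grad u x) ⬝ᵥ grad u x)
                + u x * (b x ⬝ᵥ grad u x) - c x * (u x) ^ 2))
            + ∫ x, ∑ k, ((σ x)ᵀ.mulVec (grad u x) k + u x * ν x k) ^ 2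
          ≤ -(κ / 2) * (∫ x, ((u x) ^ 2 + grad u x ⬝ᵥ grad u x))
            + C * ∫ x, (u x) ^ 2 := by
  obtain ⟨hκ0, hκ1⟩ := hκ
  have hK1 : (1:ℝ) < K := hK
  have hK0 : (0:ℝ) < K := lt_trans one_pos hK1
  refine ⟨κ/2 + (2/κ)*(d*(K + d₁*K^2)^2) + 2*K + d₁*K^2, ?_⟩
  intro a b c σ ν _hsymm hma hmb hmc hmσ hmν hba hbb hbc hbσ hbν hpsd _hpsd2 u hu hcs
  set C : ℝ := κ/2 + (2/κ)*(d*(K + d₁*K^2)^2) + 2*K + d₁*K^2 with hC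
  -- continuity / measurability of grad
  have hfc : Continuous (fderiv ℝ u) := hu.continuous_fderiv (by simp)
  have hgc : ∀ i, Continuous fun x => grad u x i := fun i =>
    hfc.clm_apply continuous_const
  have hmgi : ∀ i, Measurable fun x => grad u x i := fun i => (hgc i).measurable
  have hmu : Measurable u := hu.continuous.measurable
  -- vanishing outside tsupport u
  have hgz : ∀ x ∉ tsupport u, grad u x = 0 := by
    intro x hx
    have hz : fderiv ℝ u x = 0 := by
      by_contra h
      exact hx (support_fderiv_subset ℝ (by simpa [Function.mem_support] using h))
    funext i
    simp [grad, pd, hz]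
  have huz : ∀ x ∉ tsupport u, u x = 0 := fun x hx => image_eq_zero_of_notMem_tsupport hx
  -- bounds
  obtain ⟨Mu, hMu⟩ := hcs.exists_bound_of_continuous hu.continuous
  have hMu' : ∀ x, |u x| ≤ Mu := fun x => by simpa [Real.norm_eq_abs] using hMu x
  have hMu0 : 0 ≤ Mu := le_trans (abs_nonneg _) (hMu' 0)
  obtain ⟨Mg, hMg⟩ := (hcs.fderiv ℝ).exists_bound_of_continuous hfc
  have hMg0 : 0 ≤ Mg := le_trans (norm_nonneg _) (hMg 0)
  have hMg' : ∀ x i, |grad u x i| ≤ Mg := by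
    intro x i
    have h1 : |grad u x i| = ‖fderiv ℝ u x (Pi.single i 1)‖ := rfl
    rw [h1]
    calc ‖fderiv ℝ u x (Pi.single i 1)‖
        ≤ ‖fderiv ℝ u x‖ * ‖(Pi.single i 1 : Fin d → ℝ)‖ := (fderiv ℝ u x).le_opNorm _
      _ ≤ Mg * 1 := by
          refine mul_le_mul (hMg x) ?_ (norm_nonneg _) hMg0
          rw [Pi.norm_single]; simp
      _ = Mg := mul_one Mg
  -- the four integrands
  set f1 : (Fin d → ℝ) → ℝ := fun x => -((a x).mulVec (grad u x) ⬝ᵥ grad u x)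
      + u x * (b x ⬝ᵥ grad u x) - c x * (u x) ^ 2 with hf1
  set f2 : (Fin d → ℝ) → ℝ := fun x => ∑ k, ((σ x)ᵀ.mulVec (grad u x) k + u x * ν x k) ^ 2
    with hf2
  set f3 : (Fin d → ℝ) → ℝ := fun x => (u x) ^ 2 + grad u x ⬝ᵥ grad u x with hf3
  set f4 : (Fin d → ℝ) → ℝ := fun x => (u x) ^ 2 with hf4
  -- measurability
  have hm_ag : ∀ i, Measurable fun x => (a x *ᵥ grad u x) i := by
    intro i
    have : (fun x => (a x *ᵥ grad u x) i) = fun x => ∑ j, a x i j * grad u x j := rfl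
    rw [this]
    exact Finset.measurable_sum _ fun j _ => (hma i j).mul (hmgi j)
  have hm_σg : ∀ k, Measurable fun x => ((σ x)ᵀ *ᵥ grad u x) k := by
    intro k
    have : (fun x => ((σ x)ᵀ *ᵥ grad u x) k) = fun x => ∑ j, σ x j k * grad u x j := rfl
    rw [this]
    exact Finset.measurable_sum _ fun j _ => (hmσ j k).mul (hmgi j)
  have hmf1 : Measurable f1 := by
    have h1 : Measurable fun x => (a x *ᵥ grad u x) ⬝ᵥ grad u x := by
      have : (fun x => (a x *ᵥ grad u x) ⬝ᵥ grad u x)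
          = fun x => ∑ i, (a x *ᵥ grad u x) i * grad u x i := rfl
      rw [this]
      exact Finset.measurable_sum _ fun i _ => (hm_ag i).mul (hmgi i)
    have h2 : Measurable fun x => b x ⬝ᵥ grad u x := by
      have : (fun x => b x ⬝ᵥ grad u x) = fun x => ∑ i, b x i * grad u x i := rfl
      rw [this]
      exact Finset.measurable_sum _ fun i _ => (hmb i).mul (hmgi i)
    exact ((h1.neg.add (hmu.mul h2)).sub (hmc.mul (hmu.pow_const 2)))
  have hmf2 : Measurable f2 := by
    refine Finset.measurable_sum _ fun k _ => ?_
    exact ((hm_σg k).add (hmu.mul (hmν k))).pow_const 2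
  have hmf3 : Measurable f3 := by
    refine (hmu.pow_const 2).add ?_
    have : (fun x => grad u x ⬝ᵥ grad u x) = fun x => ∑ i, grad u x i * grad u x i := rfl
    rw [this]
    exact Finset.measurable_sum _ fun i _ => (hmgi i).mul (hmgi i)
  have hmf4 : Measurable f4 := hmu.pow_const 2
  -- bounds on integrands
  have hag_bound : ∀ x i, |(a x *ᵥ grad u x) i| ≤ d * (K * Mg) := by
    intro x i
    exact dot_bound (a x i) (grad u x) K Mg (hba x i) (hMg' x) hMg0
  have hσg_bound : ∀ x k, |((σ x)ᵀ *ᵥ grad u x) k| ≤ d * (K * Mg) := by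
    intro x k
    exact dot_bound ((σ x)ᵀ k) (grad u x) K Mg (fun i => hbσ x i k) (hMg' x) hMg0
  have hbf1 : ∀ x, |f1 x| ≤ d * ((d * (K * Mg)) * Mg) + Mu * (d * (K * Mg)) + K * Mu^2 := by
    intro x
    have t1 : |-((a x).mulVec (grad u x) ⬝ᵥ grad u x)| ≤ d * ((d * (K * Mg)) * Mg) := by
      rw [abs_neg]
      exact dot_bound _ _ _ _ (hag_bound x) (hMg' x) hMg0
    have t2 : |u x * (b x ⬝ᵥ grad u x)| ≤ Mu * (d * (K * Mg)) := by
      rw [abs_mul]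
      exact mul_le_mul (hMu' x) (dot_bound _ _ _ _ (hbb x) (hMg' x) hMg0) (abs_nonneg _) hMu0
    have t3 : |c x * (u x)^2| ≤ K * Mu^2 := by
      rw [abs_mul, abs_pow, sq_abs]
      exact mul_le_mul (hbc x) (by rw [← sq_abs]; exact pow_le_pow_left₀ (abs_nonneg _) (hMu' x) 2)
        (sq_nonneg _) (le_of_lt hK0)
    calc |f1 x| ≤ |-((a x).mulVec (grad u x) ⬝ᵥ grad u x)| + |u x * (b x ⬝ᵥ grad u x)|
          + |c x * (u x)^2| := abs3 _ _ _
      _ ≤ d * ((d * (K * Mg)) * Mg) + Mu * (d * (K * Mg)) + K * Mu^2 :=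
          add_le_add (add_le_add t1 t2) t3
  have hbf2 : ∀ x, |f2 x| ≤ d₁ * (d * (K * Mg) + Mu * K)^2 := by
    intro x
    have hterm : ∀ k, ((σ x)ᵀ.mulVec (grad u x) k + u x * ν x k) ^ 2
        ≤ (d * (K * Mg) + Mu * K)^2 := by
      intro k
      have h1 : |(σ x)ᵀ.mulVec (grad u x) k + u x * ν x k| ≤ d * (K * Mg) + Mu * K := by
        calc |(σ x)ᵀ.mulVec (grad u x) k + u x * ν x k|
            ≤ |(σ x)ᵀ.mulVec (grad u x) k| + |u x * ν x k| := abs_add_le _ _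
          _ ≤ d * (K * Mg) + Mu * K := by
              refine add_le_add (hσg_bound x k) ?_
              rw [abs_mul]
              exact mul_le_mul (hMu' x) (hbν x k) (abs_nonneg _) hMu0
      calc ((σ x)ᵀ.mulVec (grad u x) k + u x * ν x k) ^ 2
          = |(σ x)ᵀ.mulVec (grad u x) k + u x * ν x k| ^ 2 := (sq_abs _).symm
        _ ≤ (d * (K * Mg) + Mu * K)^2 := pow_le_pow_left₀ (abs_nonneg _) h1 2
    have h0 : (0:ℝ) ≤ f2 x := Finset.sum_nonneg fun k _ => sq_nonneg _
    rw [abs_of_nonneg h0]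
    calc f2 x ≤ ∑ _k : Fin d₁, (d * (K * Mg) + Mu * K)^2 := Finset.sum_le_sum fun k _ => hterm k
      _ = d₁ * (d * (K * Mg) + Mu * K)^2 := by
          rw [Finset.sum_const, Finset.card_univ, Fintype.card_fin, nsmul_eq_mul]
  have hbf3 : ∀ x, |f3 x| ≤ Mu^2 + d * (Mg * Mg) := by
    intro x
    calc |f3 x| ≤ |(u x)^2| + |grad u x ⬝ᵥ grad u x| := abs_add_le _ _
      _ ≤ Mu^2 + d * (Mg * Mg) := by
          refine add_le_add ?_ (dot_bound _ _ _ _ (hMg' x) (hMg' x) hMg0)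
          rw [abs_pow, sq_abs, ← sq_abs]
          exact pow_le_pow_left₀ (abs_nonneg _) (hMu' x) 2
  have hbf4 : ∀ x, |f4 x| ≤ Mu^2 := by
    intro x
    rw [show f4 x = (u x)^2 from rfl, abs_pow, sq_abs, ← sq_abs]
    exact pow_le_pow_left₀ (abs_nonneg _) (hMu' x) 2
  -- support vanishing
  have hz1 : ∀ x ∉ tsupport u, f1 x = 0 := by
    intro x hx; simp [hf1, huz x hx, hgz x hx]
  have hz2 : ∀ x ∉ tsupport u, f2 x = 0 := by
    intro x hx; simp [hf2, huz x hx, hgz x hx]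
  have hz3 : ∀ x ∉ tsupport u, f3 x = 0 := by
    intro x hx; simp [hf3, huz x hx, hgz x hx]
  have hz4 : ∀ x ∉ tsupport u, f4 x = 0 := by
    intro x hx; simp [hf4, huz x hx]
  -- integrability
  have hI1 : Integrable f1 := integrable_aux f1 hmf1 _ hcs _ hbf1 hz1
  have hI2 : Integrable f2 := integrable_aux f2 hmf2 _ hcs _ hbf2 hz2
  have hI3 : Integrable f3 := integrable_aux f3 hmf3 _ hcs _ hbf3 hz3
  have hI4 : Integrable f4 := integrable_aux f4 hmf4 _ hcs _ hbf4 hz4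
  -- pointwise inequality
  have hpt : ∀ x, 2 * f1 x + f2 x ≤ -(κ/2) * f3 x + C * f4 x := by
    intro x
    exact pointwise d d₁ κ K hκ0 hK1 (a x) (b x) (c x) (σ x) (ν x)
      (hbb x) (hbc x) (hbσ x) (hbν x) (hpsd x) (grad u x) (u x)
  -- conclusion
  calc 2 * (∫ x, f1 x) + ∫ x, f2 x = ∫ x, (2 * f1 x + f2 x) := by
        rw [integral_add (hI1.const_mul 2) hI2, integral_const_mul]
    _ ≤ ∫ x, (-(κ/2) * f3 x + C * f4 x) :=
        integral_mono ((hI1.const_mul 2).add hI2)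
          ((hI3.const_mul _).add (hI4.const_mul _)) hpt
    _ = -(κ/2) * (∫ x, f3 x) + C * ∫ x, f4 x := by
        rw [integral_add (hI3.const_mul _) (hI4.const_mul _), integral_const_mul,
          integral_const_mul]
end

section
/- Define h : ℝ → ℝ by h(r) = r² for r ≤ −1, h(r) = (6r³ + 8r⁴ + 3r⁵)² for −1 < r < 0, and h(r) = 0 for r ≥ 0, and for ε > 0 set h_ε(r) = ε²·h(r/ε). Then there exists a constant C such that for every ε > 0 and every r ∈ ℝ: | h_ε'(r) + 2·max(−r, 0) | ≤ C·ε. In particular h_ε'(r) → −2r⁻ uniformly on ℝ as ε → 0⁺, where r⁻ = max(−r, 0). -/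
open Filter

/-- The cutoff function `h` used in the proof of the comparison theorem. -/
noncomputable def h (r : ℝ) : ℝ :=
  if r ≤ -1 then r ^ 2
  else if r < 0 then (6 * r ^ 3 + 8 * r ^ 4 + 3 * r ^ 5) ^ 2
  else 0

/-- The rescaled cutoff `h_ε(r) = ε² h(r/ε)`. -/
noncomputable def hEps (ε r : ℝ) : ℝ := ε ^ 2 * h (r / ε)

/-- Explicit derivative of `h`. -/
noncomputable def H (r : ℝ) : ℝ :=
  if r ≤ -1 then 2 * r
  else if r < 0 then 2 * (6 * r ^ 3 + 8 * r ^ 4 + 3 * r ^ 5) * (18 * r ^ 2 + 32 * r ^ 3 + 15 * r ^ 4)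
  else 0

lemma hasDerivAt_q (r : ℝ) :
    HasDerivAt (fun x : ℝ => (6 * x ^ 3 + 8 * x ^ 4 + 3 * x ^ 5) ^ 2)
      (2 * (6 * r ^ 3 + 8 * r ^ 4 + 3 * r ^ 5) * (18 * r ^ 2 + 32 * r ^ 3 + 15 * r ^ 4)) r := by
  have h1 : HasDerivAt (fun x : ℝ => 6 * x ^ 3 + 8 * x ^ 4 + 3 * x ^ 5)
      (18 * r ^ 2 + 32 * r ^ 3 + 15 * r ^ 4) r := by
    have := (((hasDerivAt_pow 3 r).const_mul 6).add
      ((hasDerivAt_pow 4 r).const_mul 8)).add ((hasDerivAt_pow 5 r).const_mul 3)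
    exact this.congr_deriv (by rw [show (3:ℕ)-1 = 2 from rfl, show (4:ℕ)-1 = 3 from rfl, show (5:ℕ)-1 = 4 from rfl]; push_cast; ring)
  have := h1.pow 2
  exact this.congr_deriv (by rw [show (2:ℕ)-1 = 1 from rfl]; push_cast; ring)

lemma hasDerivAt_h (r : ℝ) : HasDerivAt h (H r) r := by
  rcases lt_trichotomy r (-1) with hr | hr | hr
  · have hH : H r = 2 * r := by simp [H, hr.le]
    rw [hH]
    have : HasDerivAt (fun x : ℝ => x ^ 2) (2 * r) r := by
      simpa using hasDerivAt_pow 2 r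
    apply this.congr_of_eventuallyEq
    filter_upwards [Iio_mem_nhds hr] with x hx
    have : x ≤ -1 := (Set.mem_Iio.mp hx).le
    simp [h, this]
  · subst hr
    have hH : H (-1) = -2 := by norm_num [H]
    rw [hH]
    have hleft : HasDerivWithinAt h (-2) (Set.Iic (-1)) (-1) := by
      have : HasDerivAt (fun x : ℝ => x ^ 2) (-2) (-1) := by
        simpa using hasDerivAt_pow 2 (-1 : ℝ)
      apply (this.hasDerivWithinAt).congr
      · intro x hx
        simp [h, (Set.mem_Iic.mp hx)]
      · norm_num [h]
    have hright : HasDerivWithinAt h (-2) (Set.Ici (-1)) (-1) := by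
      have hq := (hasDerivAt_q (-1)).hasDerivWithinAt (s := Set.Ici (-1))
      have hq' : HasDerivWithinAt (fun x : ℝ => (6 * x ^ 3 + 8 * x ^ 4 + 3 * x ^ 5) ^ 2)
          (-2) (Set.Ici (-1)) (-1) := hq.congr_deriv (by norm_num)
      apply hq'.congr_of_eventuallyEq
      · have hmem : Set.Iio (0 : ℝ) ∈ nhdsWithin (-1 : ℝ) (Set.Ici (-1)) :=
          nhdsWithin_le_nhds (Iio_mem_nhds (by norm_num))
        filter_upwards [hmem, self_mem_nhdsWithin] with x hx0 hx1
        rcases eq_or_lt_of_le (Set.mem_Ici.mp hx1) with h1 | h1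
        · simp [h, ← h1]; norm_num
        · simp [h, not_le.mpr h1, Set.mem_Iio.mp hx0]
      · norm_num [h]
    have := hleft.union hright
    rw [Set.Iic_union_Ici, hasDerivWithinAt_univ] at this
    exact this
  · rcases lt_trichotomy r 0 with hr0 | hr0 | hr0
    · have hH : H r = 2 * (6 * r ^ 3 + 8 * r ^ 4 + 3 * r ^ 5) * (18 * r ^ 2 + 32 * r ^ 3 + 15 * r ^ 4) := by
        simp [H, not_le.mpr hr, hr0]
      rw [hH]
      apply (hasDerivAt_q r).congr_of_eventuallyEq
      filter_upwards [Ioo_mem_nhds hr hr0] with x hx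
      simp [h, not_le.mpr hx.1, hx.2]
    · subst hr0
      have hH : H 0 = 0 := by norm_num [H]
      rw [hH]
      have hleft : HasDerivWithinAt h 0 (Set.Iic 0) 0 := by
        have hq := (hasDerivAt_q 0).hasDerivWithinAt (s := Set.Iic 0)
        have hq' : HasDerivWithinAt (fun x : ℝ => (6 * x ^ 3 + 8 * x ^ 4 + 3 * x ^ 5) ^ 2)
            0 (Set.Iic 0) 0 := hq.congr_deriv (by norm_num)
        apply hq'.congr_of_eventuallyEq
        · have hmem : Set.Ioi (-1 : ℝ) ∈ nhdsWithin (0 : ℝ) (Set.Iic 0) :=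
            nhdsWithin_le_nhds (Ioi_mem_nhds (by norm_num))
          filter_upwards [hmem, self_mem_nhdsWithin] with x hx1 hx0
          rcases eq_or_lt_of_le (Set.mem_Iic.mp hx0) with h1 | h1
          · simp [h, h1]
          · simp [h, not_le.mpr (Set.mem_Ioi.mp hx1), h1]
        · norm_num [h]
      have hright : HasDerivWithinAt h 0 (Set.Ici 0) 0 := by
        apply (hasDerivWithinAt_const (0:ℝ) _ (0:ℝ)).congr
        · intro x hx
          simp [h, Set.mem_Ici.mp hx, not_lt.mpr (Set.mem_Ici.mp hx)]
          intro hx1; linarith [Set.mem_Ici.mp hx]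
        · norm_num [h]
      have := hleft.union hright
      rw [Set.Iic_union_Ici, hasDerivWithinAt_univ] at this
      exact this
    · have hH : H r = 0 := by simp [H, not_le.mpr hr, not_lt.mpr hr0.le]
      rw [hH]
      apply (hasDerivAt_const r (0:ℝ)).congr_of_eventuallyEq
      filter_upwards [Ioi_mem_nhds hr0] with x hx
      have : ¬ x ≤ -1 := by push_neg; linarith [Set.mem_Ioi.mp hx]
      simp [h, this, not_lt.mpr (Set.mem_Ioi.mp hx).le]

lemma deriv_hEps (ε : ℝ) (hε : 0 < ε) (r : ℝ) :
    deriv (hEps ε) r = ε * H (r / ε) := by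
  have h1 : HasDerivAt (fun x : ℝ => x / ε) (1 / ε) r := by
    simpa using (hasDerivAt_id r).div_const ε
  have h2 := ((hasDerivAt_h (r / ε)).comp r h1).const_mul (ε ^ 2)
  have h3 : HasDerivAt (hEps ε) (ε * H (r / ε)) r := by
    have := hε.ne'
    exact h2.congr_deriv (by field_simp)
  exact h3.deriv

lemma H_bound (s : ℝ) : |H s + 2 * max (-s) 0| ≤ 2212 := by
  rcases le_or_gt s (-1) with hs | hs
  · have : H s = 2 * s := by simp [H, hs]
    rw [this, max_eq_left (by linarith : (0:ℝ) ≤ -s)]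
    norm_num
  · rcases lt_or_ge s 0 with hs0 | hs0
    · have hH : H s = 2 * (6 * s ^ 3 + 8 * s ^ 4 + 3 * s ^ 5) * (18 * s ^ 2 + 32 * s ^ 3 + 15 * s ^ 4) := by
        simp [H, not_le.mpr hs, hs0]
      rw [hH, max_eq_left (by linarith : (0:ℝ) ≤ -s)]
      have habs : |s| ≤ 1 := abs_le.mpr ⟨by linarith, by linarith⟩
      have hk : ∀ k : ℕ, -1 ≤ s ^ k ∧ s ^ k ≤ 1 := by
        intro k
        have : |s ^ k| ≤ 1 := by
          rw [abs_pow]; exact pow_le_one₀ (abs_nonneg _) habs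
        exact abs_le.mp this
      obtain ⟨h5a, h5b⟩ := hk 5
      obtain ⟨h6a, h6b⟩ := hk 6
      obtain ⟨h7a, h7b⟩ := hk 7
      obtain ⟨h8a, h8b⟩ := hk 8
      obtain ⟨h9a, h9b⟩ := hk 9
      rw [abs_le]
      constructor <;> nlinarith [hs, hs0]
    · have hH : H s = 0 := by simp [H, not_le.mpr hs, not_lt.mpr hs0]
      rw [hH, max_eq_right (by linarith : -s ≤ (0:ℝ))]
      norm_num

theorem stmt_7 :
    (∃ C : ℝ, ∀ ε : ℝ, 0 < ε → ∀ r : ℝ,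
      |deriv (hEps ε) r + 2 * max (-r) 0| ≤ C * ε) ∧
    TendstoUniformly (fun ε : ℝ => fun r : ℝ => deriv (hEps ε) r)
      (fun r : ℝ => -2 * max (-r) 0) (nhdsWithin 0 (Set.Ioi 0)) := by
  have key : ∀ ε : ℝ, 0 < ε → ∀ r : ℝ,
      |deriv (hEps ε) r + 2 * max (-r) 0| ≤ 2212 * ε := by
    intro ε hε r
    rw [deriv_hEps ε hε r]
    have hmax : max (-r) 0 = ε * max (-(r / ε)) 0 := by
      rw [mul_max_of_nonneg _ _ hε.le, mul_zero]
      congr 1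
      field_simp
    rw [hmax]
    have : ε * H (r / ε) + 2 * (ε * max (-(r / ε)) 0)
        = ε * (H (r / ε) + 2 * max (-(r / ε)) 0) := by ring
    rw [this, abs_mul, abs_of_pos hε, mul_comm (2212 : ℝ) ε]
    exact mul_le_mul_of_nonneg_left (H_bound _) hε.le
  refine ⟨⟨2212, key⟩, ?_⟩
  rw [Metric.tendstoUniformly_iff]
  intro δ hδ
  have hmem : Set.Ioo (0 : ℝ) (δ / 2213) ∈ nhdsWithin (0 : ℝ) (Set.Ioi 0) :=
    Ioo_mem_nhdsGT_of_mem ⟨le_refl _, by positivity⟩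
  filter_upwards [hmem] with ε hε r
  rw [Real.dist_eq]
  have h1 := key ε hε.1 r
  have h2 : -2 * max (-r) 0 - deriv (hEps ε) r = -(deriv (hEps ε) r + 2 * max (-r) 0) := by ring
  rw [h2, abs_neg]
  calc |deriv (hEps ε) r + 2 * max (-r) 0| ≤ 2212 * ε := h1
    _ < 2213 * (δ / 2213) := by nlinarith [hε.2, hε.1]
    _ = δ := by ring
end
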